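/- Let Ω ⊆ ℝ^{n+1} be open and invariant under every reflection r_i, and let f : Ω → ℝ_n be of class C². Then at every point of Ω whose coordinates x_1,…,x_n are all nonzero: S̲(D̲f) + D̲(S̲f) = 0 and S̲(x̲f) + x̲·(S̲f) = 0. -/

import Mathlib

noncomputable section

open scoped BigOperators

namespace Dunkl

/-! ### An ℓ¹ norm on an arbitrary real vector space, via a Hamel basis -/

variable {ι V : Type*} [AddCommGroup V] [Module ℝ V]

def l1fun (b : Module.Basis ι ℝ V) (v : V) : ℝ := ∑ a ∈ (b.repr v).support, |b.repr v a|

lemma l1fun_eq_sum (b : Module.Basis ι ℝ V) (v : V) {s : Finset ι} (hs : (b.repr v).support ⊆ s) :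
    l1fun b v = ∑ a ∈ s, |b.repr v a| := by
  unfold l1fun
  apply Finset.sum_subset hs
  intro a _ ha
  simp [Finsupp.notMem_support_iff.mp ha]

def l1AddGroupNorm (b : Module.Basis ι ℝ V) : AddGroupNorm V where
  toFun := l1fun b
  map_zero' := by simp [l1fun]
  add_le' := by
    intro x y
    classical
    set s := (b.repr x).support ∪ (b.repr y).support with hs
    have hxy : (b.repr (x + y)).support ⊆ s := by
      rw [map_add]; exact Finsupp.support_add
    calc l1fun b (x + y) = ∑ a ∈ s, |b.repr (x + y) a| := l1fun_eq_sum b _ hxy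
      _ ≤ ∑ a ∈ s, (|b.repr x a| + |b.repr y a|) := by
          refine Finset.sum_le_sum fun a _ => ?_
          rw [map_add]
          exact abs_add_le _ _
      _ = (∑ a ∈ s, |b.repr x a|) + ∑ a ∈ s, |b.repr y a| := Finset.sum_add_distrib
      _ = l1fun b x + l1fun b y := by
          rw [← l1fun_eq_sum b x Finset.subset_union_left,
            ← l1fun_eq_sum b y Finset.subset_union_right]
  neg' := by
    intro x
    simp [l1fun, Finsupp.support_neg]
  eq_zero_of_map_eq_zero' := by
    intro x hx
    by_contra hx0
    have hsupp : (b.repr x).support.Nonempty := by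
      rw [Finsupp.support_nonempty_iff]
      simpa using hx0
    obtain ⟨a, ha⟩ := hsupp
    have h1 : |b.repr x a| = 0 := by
      have := (Finset.sum_eq_zero_iff_of_nonneg
        (fun i _ => abs_nonneg (b.repr x i))).mp hx a ha
      exact this
    exact Finsupp.mem_support_iff.mp ha (abs_eq_zero.mp h1)

/-! ### The Clifford algebra ℝ_n = Cl(0,n) -/

def Qneg (n : ℕ) : QuadraticForm ℝ (Fin n → ℝ) :=
  QuadraticMap.weightedSumSquares ℝ (fun _ : Fin n => (-1 : ℝ))

/-- The real Clifford algebra `Cl(0,n)`. -/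
abbrev Cl (n : ℕ) : Type := CliffordAlgebra (Qneg n)

instance (n : ℕ) : NormedAddCommGroup (Cl n) :=
  AddGroupNorm.toNormedAddCommGroup (l1AddGroupNorm (Module.Basis.ofVectorSpace ℝ (Cl n)))

lemma Cl.norm_def (n : ℕ) (v : Cl n) :
    ‖v‖ = l1fun (Module.Basis.ofVectorSpace ℝ (Cl n)) v := rfl

instance (n : ℕ) : NormedSpace ℝ (Cl n) where
  norm_smul_le := by
    intro c x
    classical
    set b := Module.Basis.ofVectorSpace ℝ (Cl n)
    have hsub : (b.repr (c • x)).support ⊆ (b.repr x).support := by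
      rw [map_smul]
      exact Finsupp.support_smul
    rw [Cl.norm_def, Cl.norm_def, l1fun_eq_sum b _ hsub, l1fun]
    rw [Real.norm_eq_abs, Finset.mul_sum]
    refine le_of_eq (Finset.sum_congr rfl fun a _ => ?_)
    rw [map_smul, Finsupp.smul_apply, smul_eq_mul, abs_mul]

/-- The generators `e_1, …, e_n` of `Cl(0,n)`. -/
def gen {n : ℕ} (i : Fin n) : Cl n := CliffordAlgebra.ι (Qneg n) (Pi.single i 1)


/-! ### Points, paravectors and differential operators -/

/-- Points of `ℝ^{n+1}`, with coordinates `x 0, x 1, …, x n`. -/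
abbrev Pt (n : ℕ) : Type := Fin (n+1) → ℝ

variable {n : ℕ}

/-- The imaginary part `x̲ = Σ x_i e_i` of a point, as an element of `Cl(0,n)`. -/
def im (x : Pt n) : Cl n := ∑ i : Fin n, x i.succ • gen i

/-- The paravector `x_0 + Σ x_i e_i` associated to a point of `ℝ^{n+1}`. -/
def par (x : Pt n) : Cl n := algebraMap ℝ (Cl n) (x 0) + im x

/-- `‖x̲‖² = Σ_{i=1}^n x_i²`. -/
def normSqIm (x : Pt n) : ℝ := ∑ i : Fin n, (x i.succ)^2

/-- `x̲⁻¹ = -x̲/‖x̲‖²` (junk value `0` when `x̲ = 0`). -/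
def imInv (x : Pt n) : Cl n := -((normSqIm x)⁻¹ • im x)

/-- The Clifford conjugate `x^c = x_0 - x̲`, as a point of `ℝ^{n+1}`. -/
def conj (x : Pt n) : Pt n := fun t => if t = 0 then x t else -(x t)

/-- The reflection `r_i`, changing the sign of the coordinate `x_i` (`1 ≤ i ≤ n`). -/
def refl (i : Fin n) (x : Pt n) : Pt n := fun t => if t = i.succ then -(x t) else x t

/-- The partial derivative `∂f/∂x_i` of an `ℝ_n`-valued function. -/
def pd (i : Fin (n+1)) (f : Pt n → Cl n) : Pt n → Cl n :=
  fun x => fderiv ℝ f x (Pi.single i 1)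

/-- The Euler operator `𝔼 f = Σ_{i=1}^n x_i ∂_{x_i} f`. -/
def euler (f : Pt n → Cl n) : Pt n → Cl n :=
  fun x => ∑ i : Fin n, x i.succ • pd i.succ f x

/-- The Cauchy-Riemann operator `∂̄f = ∂_{x_0}f + Σ e_i ∂_{x_i} f`. -/
def CRop (f : Pt n → Cl n) : Pt n → Cl n :=
  fun x => pd 0 f x + ∑ i : Fin n, gen i * pd i.succ f x

/-- `ϑ̄f(x) = ∂_{x_0}f(x) − x̲⁻¹·(𝔼f)(x)`. -/
def thetaBar (f : Pt n → Cl n) : Pt n → Cl n :=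
  fun x => pd 0 f x - imInv x * euler f x

/-- The spherical Dirac operator `Γf = -Σ_{i<j} e_i e_j (x_i ∂_{x_j}f − x_j ∂_{x_i}f)`. -/
def sphDirac (f : Pt n → Cl n) : Pt n → Cl n :=
  fun x => -∑ i : Fin n, ∑ j : Fin n,
    if i < j then gen i * (gen j * (x i.succ • pd j.succ f x - x j.succ • pd i.succ f x)) else 0

/-! ### Dunkl operators for the reflection group ℤ₂ⁿ -/

/-- The Dunkl operator `T_i f(x) = ∂_{x_i}f(x) + (k_i/x_i)(f(x) − f(r_i x))`. -/
def T (k : Fin n → ℝ) (i : Fin n) (f : Pt n → Cl n) : Pt n → Cl n :=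
  fun x => pd i.succ f x + (k i / x i.succ) • (f x - f (refl i x))

/-- The Dunkl-Dirac operator `D̲f = Σ e_i T_i f`. -/
def dunklDirac (k : Fin n → ℝ) (f : Pt n → Cl n) : Pt n → Cl n :=
  fun x => ∑ i : Fin n, gen i * T k i f x

/-- The Dunkl-Cauchy-Riemann operator `Df = ∂_{x_0}f + D̲f`. -/
def dunklCR (k : Fin n → ℝ) (f : Pt n → Cl n) : Pt n → Cl n :=
  fun x => pd 0 f x + dunklDirac k f x

/-- The Dunkl Laplacian `Δ_D f = Σ T_i(T_i f)`. -/
def dunklLap (k : Fin n → ℝ) (f : Pt n → Cl n) : Pt n → Cl n :=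
  fun x => ∑ i : Fin n, T k i (T k i f) x

/-- The Casimir operator `S̲f = ½(x̲·(D̲f) − D̲(x̲f) − f)`. -/
def casimir (k : Fin n → ℝ) (f : Pt n → Cl n) : Pt n → Cl n :=
  fun x => (2:ℝ)⁻¹ • (im x * dunklDirac k f x - dunklDirac k (fun y => im y * f y) x - f x)

/-- The Casimir operator in the form `S̲f = x̲·(D̲f) + 𝔼f`
(valid when `Σ k_i = (1−n)/2`). -/
def scas (k : Fin n → ℝ) (f : Pt n → Cl n) : Pt n → Cl n :=
  fun x => im x * dunklDirac k f x + euler f x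

/-- `S̃f = Σ_{i=1}^n k_i (f − f∘r_i)`. -/
def stilde (k : Fin n → ℝ) (f : Pt n → Cl n) : Pt n → Cl n :=
  fun x => ∑ i : Fin n, k i • (f x - f (refl i x))

/-- The spherical value `f_s°(x) = ½(f(x) + f(x^c))`. -/
def sval (f : Pt n → Cl n) : Pt n → Cl n :=
  fun x => (2:ℝ)⁻¹ • (f x + f (conj x))

/-- `S′f = S̃(f_s°)`. -/
def sprime (k : Fin n → ℝ) (f : Pt n → Cl n) : Pt n → Cl n :=
  stilde k (sval f)

/-- `S″f = S̃((x̲f)_s°)`. -/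
def sdprime (k : Fin n → ℝ) (f : Pt n → Cl n) : Pt n → Cl n :=
  stilde k (sval (fun y => im y * f y))

/-! ### Symmetric sets and slice functions -/

/-- A point has all the coordinates `x_1, …, x_n` nonzero. -/
def allNZ (x : Pt n) : Prop := ∀ i : Fin n, x i.succ ≠ 0

/-- A set invariant under all the reflections `r_1, …, r_n`. -/
def ReflInv (Ω : Set (Pt n)) : Prop := ∀ i : Fin n, ∀ x ∈ Ω, refl i x ∈ Ω

/-- An axially symmetric subset of `ℝ^{n+1}`. -/
def AxSymm (Ω : Set (Pt n)) : Prop :=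
  ∀ x ∈ Ω, ∀ y : Pt n, y 0 = x 0 → normSqIm y = normSqIm x → y ∈ Ω

/-- The set `𝕊` of imaginary units of the paravector space. -/
def unitSphere (n : ℕ) : Set (Pt n) := {J | J 0 = 0 ∧ normSqIm J = 1}

/-- The point `α + βJ` of `ℝ^{n+1}`. -/
def ptOf (α β : ℝ) (J : Pt n) : Pt n := fun t => (if t = 0 then α else 0) + β * J t

/-- The set `D = {(α,β) : α + βJ ∈ Ω for all J ∈ 𝕊}`. -/
def sliceDom (Ω : Set (Pt n)) : Set (ℝ × ℝ) :=
  {p | ∀ J ∈ unitSphere n, ptOf p.1 p.2 J ∈ Ω}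

/-- `f` is a slice function on `Ω`. -/
def IsSlice (Ω : Set (Pt n)) (f : Pt n → Cl n) : Prop :=
  ∃ F0 F1 : ℝ × ℝ → Cl n,
    (∀ p ∈ sliceDom Ω, F0 (p.1, -p.2) = F0 p) ∧
    (∀ p ∈ sliceDom Ω, F1 (p.1, -p.2) = -F1 p) ∧
    (∀ p ∈ sliceDom Ω, ∀ J ∈ unitSphere n, f (ptOf p.1 p.2 J) = F0 p + im J * F1 p)

/-- `f` is a slice function of class `C¹` on `Ω`. -/
def IsSliceC1 (Ω : Set (Pt n)) (f : Pt n → Cl n) : Prop :=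
  ∃ F0 F1 : ℝ × ℝ → Cl n,
    ContDiffOn ℝ 1 F0 (sliceDom Ω) ∧ ContDiffOn ℝ 1 F1 (sliceDom Ω) ∧
    (∀ p ∈ sliceDom Ω, F0 (p.1, -p.2) = F0 p) ∧
    (∀ p ∈ sliceDom Ω, F1 (p.1, -p.2) = -F1 p) ∧
    (∀ p ∈ sliceDom Ω, ∀ J ∈ unitSphere n, f (ptOf p.1 p.2 J) = F0 p + im J * F1 p)

/-- `f` is slice-regular on `Ω`: it is an (inclusive) slice function of class `C¹`
whose inducing stem function satisfies the Cauchy-Riemann equations. -/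
def IsSliceReg (Ω : Set (Pt n)) (f : Pt n → Cl n) : Prop :=
  ∃ F0 F1 : ℝ × ℝ → Cl n,
    ContDiffOn ℝ 1 F0 (sliceDom Ω) ∧ ContDiffOn ℝ 1 F1 (sliceDom Ω) ∧
    (∀ p ∈ sliceDom Ω,
      fderivWithin ℝ F0 (sliceDom Ω) p (1, 0) = fderivWithin ℝ F1 (sliceDom Ω) p (0, 1) ∧
      fderivWithin ℝ F0 (sliceDom Ω) p (0, 1) = -(fderivWithin ℝ F1 (sliceDom Ω) p (1, 0))) ∧
    (∀ p ∈ sliceDom Ω, F0 (p.1, -p.2) = F0 p) ∧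
    (∀ p ∈ sliceDom Ω, F1 (p.1, -p.2) = -F1 p) ∧
    (∀ p ∈ sliceDom Ω, ∀ J ∈ unitSphere n, f (ptOf p.1 p.2 J) = F0 p + im J * F1 p)

/-- Polynomial functions `ℝ^{n+1} → ℝ_n`. -/
def IsPolyFun (f : Pt n → Cl n) : Prop :=
  ∃ (s : Finset (Fin (n+1) → ℕ)) (a : (Fin (n+1) → ℕ) → Cl n),
    ∀ x : Pt n, f x = ∑ ν ∈ s, (∏ i : Fin (n+1), x i ^ ν i) • a ν


/-! ### Intermediate Dunkl-Dirac operators associated with a subset `A ⊆ {1,…,n}` -/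

/-- `x̲_A = Σ_{i∈A} x_i e_i`. -/
def imA (A : Finset (Fin n)) (x : Pt n) : Cl n := ∑ i ∈ A, x i.succ • gen i

/-- `𝔼_A f = Σ_{i∈A} x_i ∂_{x_i} f`. -/
def eulerA (A : Finset (Fin n)) (f : Pt n → Cl n) : Pt n → Cl n :=
  fun x => ∑ i ∈ A, x i.succ • pd i.succ f x

/-- `D̲_A f = Σ_{i∈A} e_i T_i f`. -/
def dunklDiracA (k : Fin n → ℝ) (A : Finset (Fin n)) (f : Pt n → Cl n) : Pt n → Cl n :=
  fun x => ∑ i ∈ A, gen i * T k i f x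

/-- `S̲_A f = ½(x̲_A (D̲_A f) − D̲_A(x̲_A f) − f)`. -/
def casimirA (k : Fin n → ℝ) (A : Finset (Fin n)) (f : Pt n → Cl n) : Pt n → Cl n :=
  fun x => (2:ℝ)⁻¹ •
    (imA A x * dunklDiracA k A f x - dunklDiracA k A (fun y => imA A y * f y) x - f x)

/-- `S̲_A f = x̲_A (D̲_A f) + 𝔼_A f` (the form valid for `A`-admissible multiplicities). -/
def scasA (k : Fin n → ℝ) (A : Finset (Fin n)) (f : Pt n → Cl n) : Pt n → Cl n :=
  fun x => imA A x * dunklDiracA k A f x + eulerA A f x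

/-- The composition `r_A` of the reflections `r_i`, `i ∈ A`. -/
def reflA (A : Finset (Fin n)) (x : Pt n) : Pt n :=
  fun t => Fin.cases (x 0) (fun i => if i ∈ A then -(x i.succ) else x i.succ) t

/-- The `A`-spherical value `f°_{s,A}(x) = ½(f(x) + f(r_A x))`. -/
def svalA (A : Finset (Fin n)) (f : Pt n → Cl n) : Pt n → Cl n :=
  fun x => (2:ℝ)⁻¹ • (f x + f (reflA A x))

/-- `S̃_A f = Σ_{i∈A} k_i (f − f∘r_i)`. -/
def stildeA (k : Fin n → ℝ) (A : Finset (Fin n)) (f : Pt n → Cl n) : Pt n → Cl n :=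
  fun x => ∑ i ∈ A, k i • (f x - f (refl i x))

/-- `S′_A f = S̃_A(f°_{s,A})`. -/
def sprimeA (k : Fin n → ℝ) (A : Finset (Fin n)) (f : Pt n → Cl n) : Pt n → Cl n :=
  stildeA k A (svalA A f)

/-- `S″_A f = S̃_A((x̲_A f)°_{s,A})`. -/
def sdprimeA (k : Fin n → ℝ) (A : Finset (Fin n)) (f : Pt n → Cl n) : Pt n → Cl n :=
  stildeA k A (svalA A (fun y => imA A y * f y))

/-- The multiplicities `(k_i)_{i∈A}` are `A`-admissible: nonpositive on `A`, at most one of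
them vanishing, and `Σ_{i∈A} k_i = (1−|A|)/2`. -/
def AdmissibleOn (A : Finset (Fin n)) (k : Fin n → ℝ) : Prop :=
  (∀ i ∈ A, k i ≤ 0) ∧ (∀ i ∈ A, ∀ j ∈ A, k i = 0 → k j = 0 → i = j) ∧
  (∑ i ∈ A, k i = (1 - (A.card : ℝ)) / 2)

/-- The condition `𝒮_A f = 0` on `Ω`:  `S̲_A f` vanishes at every point of `Ω` whose
coordinates `x_i`, `i ∈ A`, are all nonzero, and `S′_A f = S″_A f = 0` on `Ω`. -/
def SAvanishes (k : Fin n → ℝ) (A : Finset (Fin n)) (Ω : Set (Pt n))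
    (f : Pt n → Cl n) : Prop :=
  (∀ x ∈ Ω, (∀ i ∈ A, x i.succ ≠ 0) → scasA k A f x = 0) ∧
  (∀ x ∈ Ω, sprimeA k A f x = 0) ∧
  (∀ x ∈ Ω, sdprimeA k A f x = 0)

/-- An `A`-circular subset of `ℝ^{n+1}`. -/
def ACircular (A : Finset (Fin n)) (Ω : Set (Pt n)) : Prop :=
  ∀ x ∈ Ω, ∀ y : Pt n, y 0 = x 0 → (∀ i : Fin n, i ∉ A → y i.succ = x i.succ) →
    (∑ i ∈ A, (y i.succ)^2) = (∑ i ∈ A, (x i.succ)^2) → y ∈ Ω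

end Dunkl


namespace Dunkl
open CliffordAlgebra

variable {n : ℕ}

/-! #### Clifford algebra basics -/

lemma Qneg_apply (v : Fin n → ℝ) : Qneg n v = -∑ i, v i ^ 2 := by
  simp [Qneg, QuadraticMap.weightedSumSquares_apply, sq, Finset.sum_neg_distrib]

lemma gen_sq (i : Fin n) : gen i * gen i = -1 := by
  rw [gen, ι_sq_scalar, Qneg_apply]
  have : ∑ t, ((Pi.single i 1 : Fin n → ℝ)) t ^ 2 = 1 := by
    simp [Pi.single_apply, sq]
  rw [this]; simp

lemma gen_anticomm {i j : Fin n} (h : i ≠ j) : gen i * gen j = -(gen j * gen i) := by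
  have hpol : QuadraticMap.polar (⇑(Qneg n)) (Pi.single i 1) (Pi.single j 1) = 0 := by
    rw [QuadraticMap.polar]
    rw [Qneg_apply, Qneg_apply, Qneg_apply]
    have : ∑ t, ((Pi.single i 1 + Pi.single j 1 : Fin n → ℝ)) t ^ 2
        = (∑ t, ((Pi.single i 1 : Fin n → ℝ)) t ^ 2) + ∑ t, ((Pi.single j 1 : Fin n → ℝ)) t ^ 2 := by
      rw [← Finset.sum_add_distrib]
      refine Finset.sum_congr rfl fun t _ => ?_
      rcases eq_or_ne t i with rfl|hti
      · simp [Pi.single_apply, h.symm]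
      · rcases eq_or_ne t j with rfl|htj
        · simp [Pi.single_apply, hti]
        · simp [Pi.single_apply, hti, htj]
    rw [this]; ring
  have h2 := ι_mul_ι_add_swap (Q := Qneg n) (Pi.single i 1) (Pi.single j 1)
  rw [hpol, map_zero] at h2
  rw [gen, gen]
  exact eq_neg_of_add_eq_zero_left h2

/-- product of generators along a list -/
def genProd (l : List (Fin n)) : Cl n := (l.map gen).prod

@[simp] lemma genProd_nil : genProd ([] : List (Fin n)) = 1 := rfl
@[simp] lemma genProd_cons (i : Fin n) (l : List (Fin n)) :
    genProd (i :: l) = gen i * genProd l := by simp [genProd]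

def clSpan (n : ℕ) : Submodule ℝ (Cl n) :=
  Submodule.span ℝ (genProd '' {l : List (Fin n) | l.Pairwise (· < ·)})

lemma genProd_mem_clSpan {l : List (Fin n)} (hl : l.Pairwise (· < ·)) :
    genProd l ∈ clSpan n := Submodule.subset_span ⟨l, hl, rfl⟩

lemma gen_mul_sorted (l : List (Fin n)) (hl : l.Pairwise (· < ·)) (i : Fin n) :
    ∃ (c : ℝ) (m : List (Fin n)), m.Pairwise (· < ·) ∧ (∀ a ∈ m, a = i ∨ a ∈ l) ∧
      gen i * genProd l = c • genProd m := by
  induction l with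
  | nil =>
    exact ⟨1, [i], List.pairwise_singleton _ i, by simp, by simp⟩
  | cons j t ih =>
    have ht : t.Pairwise (· < ·) := hl.of_cons
    have hjt : ∀ a ∈ t, j < a := fun a ha => (List.pairwise_cons.mp hl).1 a ha
    rcases lt_trichotomy i j with hij|rfl|hij
    · refine ⟨1, i :: j :: t, ?_, by simp +contextual [or_comm], by simp⟩
      exact List.pairwise_cons.mpr ⟨fun a ha => by
        rcases List.mem_cons.mp ha with rfl|h2
        · exact hij
        · exact hij.trans (hjt a h2), hl⟩
    · refine ⟨-1, t, ht, fun a ha => Or.inr (List.mem_cons_of_mem _ ha), ?_⟩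
      rw [genProd_cons, ← mul_assoc, gen_sq]
      simp
    · obtain ⟨c, m, hm, hmem, heq⟩ := ih ht
      refine ⟨-c, j :: m, ?_, ?_, ?_⟩
      · refine List.pairwise_cons.mpr ⟨fun a ha => ?_, hm⟩
        rcases hmem a ha with rfl|h2
        · exact hij
        · exact hjt a h2
      · intro a ha
        rcases List.mem_cons.mp ha with rfl|h2
        · exact Or.inr List.mem_cons_self
        · rcases hmem a h2 with rfl|h3
          · exact Or.inl rfl
          · exact Or.inr (List.mem_cons_of_mem _ h3)
      · rw [genProd_cons, ← mul_assoc, gen_anticomm (ne_of_gt hij), neg_mul, mul_assoc, heq,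
          genProd_cons]
        rw [mul_smul_comm]
        simp

lemma gen_mul_mem_clSpan (i : Fin n) {z : Cl n} (hz : z ∈ clSpan n) :
    gen i * z ∈ clSpan n := by
  induction hz using Submodule.span_induction with
  | mem x hx =>
    obtain ⟨l, hl, rfl⟩ := hx
    obtain ⟨c, m, hm, -, heq⟩ := gen_mul_sorted l hl i
    rw [heq]
    exact Submodule.smul_mem _ _ (genProd_mem_clSpan hm)
  | zero => simp
  | add x y _ _ hx hy => rw [mul_add]; exact Submodule.add_mem _ hx hy
  | smul c x _ hx => rw [mul_smul_comm]; exact Submodule.smul_mem _ _ hx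

lemma genProd_mul_mem_clSpan (l : List (Fin n)) {z : Cl n} (hz : z ∈ clSpan n) :
    genProd l * z ∈ clSpan n := by
  induction l with
  | nil => simpa using hz
  | cons i t ih =>
    rw [genProd_cons, mul_assoc]
    exact gen_mul_mem_clSpan i ih

lemma genProd_mem_clSpan' (l : List (Fin n)) : genProd l ∈ clSpan n := by
  simpa using genProd_mul_mem_clSpan l (genProd_mem_clSpan (List.Pairwise.nil))

lemma clSpan_eq_top : clSpan n = ⊤ := by
  rw [Submodule.eq_top_iff']
  intro x
  induction x using CliffordAlgebra.induction with
  | algebraMap r =>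
    have : (algebraMap ℝ (Cl n)) r = r • genProd [] := by simp [Algebra.algebraMap_eq_smul_one]
    rw [this]
    exact Submodule.smul_mem _ _ (genProd_mem_clSpan List.Pairwise.nil)
  | ι v =>
    have : (ι (Qneg n)) v = ∑ i, v i • gen i := by
      nth_rw 1 [show v = ∑ i, v i • (Pi.single i 1 : Fin n → ℝ) by
        simp [← Pi.single_smul, Finset.univ_sum_single]]
      rw [map_sum]
      exact Finset.sum_congr rfl fun i _ => by rw [map_smul]; rfl
    rw [this]
    refine Submodule.sum_mem _ fun i _ => Submodule.smul_mem _ _ ?_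
    simpa using genProd_mem_clSpan' [i]
  | mul a b ha hb =>
    induction ha using Submodule.span_induction with
    | mem x hx =>
      obtain ⟨l, -, rfl⟩ := hx
      exact genProd_mul_mem_clSpan l hb
    | zero => simp
    | add x y _ _ hx hy => rw [add_mul]; exact Submodule.add_mem _ hx hy
    | smul c x _ hx => rw [smul_mul_assoc]; exact Submodule.smul_mem _ _ hx
  | add a b ha hb => exact Submodule.add_mem _ ha hb

instance : Module.Finite ℝ (Cl n) := by
  rw [Module.finite_def, Submodule.fg_def]
  refine ⟨genProd '' {l : List (Fin n) | l.Pairwise (· < ·)}, ?_, clSpan_eq_top⟩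
  refine Set.Finite.image _ (Set.Finite.subset (List.finite_length_le (Fin n) n) ?_)
  intro l hl
  simpa using (List.Pairwise.nodup hl).length_le_card

instance : FiniteDimensional ℝ (Cl n) := inferInstance

/-! #### `im` identities -/

lemma im_eq_iota (x : Pt n) : im x = ι (Qneg n) (fun i => x i.succ) := by
  rw [im]
  have : (fun i => x i.succ) = ∑ i : Fin n, Pi.single i (x i.succ) := by
    rw [Finset.univ_sum_single]
  rw [this, map_sum]
  refine Finset.sum_congr rfl fun i _ => ?_
  rw [gen, ← map_smul]
  congr 1
  ext t
  simp [Pi.single_apply]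

lemma im_mul_im (x : Pt n) : im x * im x = algebraMap ℝ (Cl n) (-(normSqIm x)) := by
  rw [im_eq_iota, ι_sq_scalar, Qneg_apply, normSqIm]

lemma algebraMap_mul_eq_smul (r : ℝ) (v : Cl n) : algebraMap ℝ (Cl n) r * v = r • v :=
  (Algebra.smul_def r v).symm

lemma gen_mul_im (i : Fin n) (x : Pt n) :
    gen i * im x = -(im x * gen i) - algebraMap ℝ (Cl n) (2 * x i.succ) := by
  have hpol : QuadraticMap.polar (⇑(Qneg n)) (Pi.single i 1) (fun j => x j.succ)
      = -(2 * x i.succ) := by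
    rw [QuadraticMap.polar, Qneg_apply, Qneg_apply, Qneg_apply]
    have h1 : ∑ t, ((Pi.single i 1 : Fin n → ℝ) t + x t.succ) ^ 2
        = ∑ t, (((Pi.single i 1 : Fin n → ℝ) t)^2 + 2 * ((Pi.single i 1 : Fin n → ℝ) t * x t.succ)
            + (x t.succ)^2) := by
      refine Finset.sum_congr rfl fun t _ => by ring
    have h2 : ∑ t, (Pi.single i 1 : Fin n → ℝ) t * x t.succ = x i.succ := by
      simp [Pi.single_apply]
    have h3 : (∑ t, ((Pi.single i 1 + (fun j => x j.succ) : Fin n → ℝ)) t ^ 2)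
        = ∑ t, ((Pi.single i 1 : Fin n → ℝ) t + x t.succ) ^ 2 := rfl
    rw [h3, h1, Finset.sum_add_distrib, Finset.sum_add_distrib, ← Finset.mul_sum, h2]
    ring
  have h2 := ι_mul_ι_add_swap (Q := Qneg n) (Pi.single i 1) (fun j => x j.succ)
  rw [hpol] at h2
  rw [← im_eq_iota] at h2
  have h3 := eq_sub_of_add_eq h2
  rw [gen, h3, map_neg]
  abel

lemma im_refl (i : Fin n) (x : Pt n) :
    im (refl i x) = im x - (2 * x i.succ) • gen i := by
  rw [im, im]
  have step : ∀ j : Fin n, refl i x j.succ • gen j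
      = x j.succ • gen j - (if j = i then (2 * x i.succ) • gen i else 0) := by
    intro j
    rcases eq_or_ne j i with rfl|hji
    · have : refl j x j.succ = -(x j.succ) := by simp [refl]
      rw [this, if_pos rfl, ← sub_smul]
      congr 1
      ring
    · have : refl i x j.succ = x j.succ := by
        show (if j.succ = i.succ then -(x j.succ) else x j.succ) = x j.succ
        exact if_neg (fun h => hji (Fin.succ_inj.mp h))
      rw [this, if_neg hji, sub_zero]
  rw [Finset.sum_congr rfl (fun j _ => step j), Finset.sum_sub_distrib]
  simp

lemma im_mul_eq_sum (x : Pt n) (v : Cl n) : im x * v = ∑ i, x i.succ • (gen i * v) := by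
  rw [im, Finset.sum_mul]
  exact Finset.sum_congr rfl fun i _ => smul_mul_assoc _ _ _

/-! #### Continuous linear maps -/

def reflCLM (i : Fin n) : Pt n →L[ℝ] Pt n :=
  LinearMap.toContinuousLinearMap
    { toFun := refl i
      map_add' := by
        intro x y
        funext t
        show (if t = i.succ then -((x+y) t) else (x+y) t)
          = (if t = i.succ then -(x t) else x t) + (if t = i.succ then -(y t) else y t)
        by_cases h : t = i.succ <;> simp [h] <;> ring
      map_smul' := by
        intro c x
        funext t
        show (if t = i.succ then -((c • x) t) else (c • x) t)
          = c • (if t = i.succ then -(x t) else x t)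
        by_cases h : t = i.succ <;> simp [h] <;> ring }

@[simp] lemma reflCLM_apply (i : Fin n) (x : Pt n) : reflCLM i x = refl i x := rfl

def imCLM : Pt n →L[ℝ] Cl n :=
  LinearMap.toContinuousLinearMap
    { toFun := im
      map_add' := by
        intro x y
        show (∑ i : Fin n, (x + y) i.succ • gen i)
          = (∑ i : Fin n, x i.succ • gen i) + ∑ i : Fin n, y i.succ • gen i
        rw [← Finset.sum_add_distrib]
        exact Finset.sum_congr rfl fun i _ => by
          rw [Pi.add_apply, add_smul]
      map_smul' := by
        intro c x
        show (∑ i : Fin n, (c • x) i.succ • gen i) = c • ∑ i : Fin n, x i.succ • gen i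
        rw [Finset.smul_sum]
        exact Finset.sum_congr rfl fun i _ => by
          rw [Pi.smul_apply, smul_smul, smul_eq_mul] }

@[simp] lemma imCLM_apply (x : Pt n) : imCLM (n := n) x = im x := rfl

def mulCLM : Cl n →L[ℝ] Cl n →L[ℝ] Cl n :=
  LinearMap.toContinuousLinearMap
    { toFun := fun a => LinearMap.toContinuousLinearMap (LinearMap.mulLeft ℝ a)
      map_add' := by
        intro a b
        ext v
        show (a + b) * v = a * v + b * v
        rw [add_mul]
      map_smul' := by
        intro c a
        ext v
        show (c • a) * v = c • (a * v)
        rw [smul_mul_assoc] }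

@[simp] lemma mulCLM_apply (a b : Cl n) : mulCLM a b = a * b := rfl

/-! #### `pd` calculus -/

lemma pd_congr {f g : Pt n → Cl n} {x : Pt n} (j : Fin (n+1))
    (h : f =ᶠ[nhds x] g) : pd j f x = pd j g x := by
  unfold pd
  rw [h.fderiv_eq]

lemma pd_add {f g : Pt n → Cl n} {x : Pt n} (j : Fin (n+1))
    (hf : DifferentiableAt ℝ f x) (hg : DifferentiableAt ℝ g x) :
    pd j (fun y => f y + g y) x = pd j f x + pd j g x := by
  unfold pd; rw [fderiv_fun_add hf hg]; simp

lemma pd_neg {f : Pt n → Cl n} {x : Pt n} (j : Fin (n+1)) :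
    pd j (fun y => -(f y)) x = -(pd j f x) := by
  unfold pd; rw [fderiv_fun_neg]; simp

lemma pd_sub {f g : Pt n → Cl n} {x : Pt n} (j : Fin (n+1))
    (hf : DifferentiableAt ℝ f x) (hg : DifferentiableAt ℝ g x) :
    pd j (fun y => f y - g y) x = pd j f x - pd j g x := by
  unfold pd; rw [fderiv_fun_sub hf hg]; simp

lemma pd_const_smul {f : Pt n → Cl n} {x : Pt n} (j : Fin (n+1)) (c : ℝ)
    (hf : DifferentiableAt ℝ f x) :
    pd j (fun y => c • f y) x = c • pd j f x := by
  unfold pd; rw [fderiv_fun_const_smul hf]; simp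

lemma pd_sum {ι : Type*} {s : Finset ι} {F : ι → Pt n → Cl n} {x : Pt n} (j : Fin (n+1))
    (hF : ∀ i ∈ s, DifferentiableAt ℝ (F i) x) :
    pd j (fun y => ∑ i ∈ s, F i y) x = ∑ i ∈ s, pd j (F i) x := by
  unfold pd; rw [fderiv_fun_sum hF]; simp

lemma pd_clm_comp {f : Pt n → Cl n} {x : Pt n} (j : Fin (n+1)) (L : Cl n →L[ℝ] Cl n)
    (hf : DifferentiableAt ℝ f x) :
    pd j (fun y => L (f y)) x = L (pd j f x) := by
  unfold pd
  have h : HasFDerivAt (fun y => L (f y)) (L.comp (fderiv ℝ f x)) x :=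
    L.hasFDerivAt.comp x hf.hasFDerivAt
  rw [h.fderiv]
  rfl

lemma pd_const_mul {f : Pt n → Cl n} {x : Pt n} (j : Fin (n+1)) (a : Cl n)
    (hf : DifferentiableAt ℝ f x) :
    pd j (fun y => a * f y) x = a * pd j f x := by
  simpa using pd_clm_comp j (mulCLM a) hf

lemma pd_smul {c : Pt n → ℝ} {c' : Pt n →L[ℝ] ℝ} {f : Pt n → Cl n} {x : Pt n} (j : Fin (n+1))
    (hc : HasFDerivAt c c' x) (hf : DifferentiableAt ℝ f x) :
    pd j (fun y => c y • f y) x = c' (Pi.single j 1) • f x + c x • pd j f x := by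
  unfold pd
  rw [fderiv_fun_smul hc.differentiableAt hf, hc.fderiv]
  simp [add_comm]

lemma pd_mul {g h : Pt n → Cl n} {x : Pt n} (j : Fin (n+1))
    (hg : DifferentiableAt ℝ g x) (hh : DifferentiableAt ℝ h x) :
    pd j (fun y => g y * h y) x = pd j g x * h x + g x * pd j h x := by
  have hc : DifferentiableAt ℝ (fun y => mulCLM (g y)) x :=
    (mulCLM (n := n)).differentiableAt.comp x hg
  have key := fderiv_clm_apply hc hh
  have hfun : (fun y => (mulCLM (g y)) (h y)) = fun y => g y * h y := by
    funext y; simp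
  rw [hfun] at key
  unfold pd
  rw [key]
  have hc' : fderiv ℝ (fun y => mulCLM (g y)) x = (mulCLM (n := n)).comp (fderiv ℝ g x) :=
    ((mulCLM (n := n)).hasFDerivAt.comp x hg.hasFDerivAt).fderiv
  rw [hc']
  simp [add_comm]

lemma pd_comp_refl {f : Pt n → Cl n} {x : Pt n} (j : Fin (n+1)) (i : Fin n)
    (hf : DifferentiableAt ℝ f (refl i x)) :
    pd j (fun y => f (refl i y)) x
      = (if j = i.succ then (-1:ℝ) else 1) • pd j f (refl i x) := by
  have hcomp : HasFDerivAt (fun y => f (refl i y))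
      ((fderiv ℝ f (refl i x)).comp (reflCLM i)) x := by
    have h1 : HasFDerivAt f (fderiv ℝ f (refl i x)) (reflCLM i x) := by
      rw [reflCLM_apply]; exact hf.hasFDerivAt
    exact h1.comp x (reflCLM i).hasFDerivAt
  unfold pd
  rw [hcomp.fderiv]
  show fderiv ℝ f (refl i x) (refl i (Pi.single j 1 : Pt n)) = _
  have hrs : refl i (Pi.single j 1 : Pt n)
      = (if j = i.succ then (-1:ℝ) else 1) • (Pi.single j 1 : Pt n) := by
    funext t
    show (if t = i.succ then -((Pi.single j 1 : Pt n) t) else (Pi.single j 1 : Pt n) t)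
      = ((if j = i.succ then (-1:ℝ) else 1) • (Pi.single j 1 : Pt n)) t
    by_cases htj : t = j
    · subst htj
      simp only [Pi.single_apply, if_pos rfl, Pi.smul_apply, smul_eq_mul, mul_one]
      by_cases ht : t = i.succ <;> simp [ht]
    · simp only [Pi.single_apply, if_neg htj, Pi.smul_apply, smul_eq_mul, mul_zero,
        neg_zero, ite_self]
  rw [hrs, map_smul]

lemma hasFDerivAt_coord (m : Fin (n+1)) (x : Pt n) :
    HasFDerivAt (fun y : Pt n => y m)
      (ContinuousLinearMap.proj (R := ℝ) (φ := fun _ : Fin (n+1) => ℝ) m) x :=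
  (ContinuousLinearMap.proj (R := ℝ) (φ := fun _ : Fin (n+1) => ℝ) m).hasFDerivAt

lemma pd_coord_smul {f : Pt n → Cl n} {x : Pt n} (j m : Fin (n+1))
    (hf : DifferentiableAt ℝ f x) :
    pd j (fun y => y m • f y) x
      = (if m = j then (1:ℝ) else 0) • f x + x m • pd j f x := by
  rw [pd_smul j (hasFDerivAt_coord m x) hf]
  congr 2
  show (Pi.single j 1 : Pt n) m = if m = j then (1:ℝ) else 0
  rw [Pi.single_apply]

lemma hasFDerivAt_quot (i : Fin n) {x : Pt n} (hx : x i.succ ≠ 0) (kk : ℝ) :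
    HasFDerivAt (fun y : Pt n => kk / y i.succ)
      ((kk * (-((x i.succ) ^ 2)⁻¹)) • (ContinuousLinearMap.proj i.succ : Pt n →L[ℝ] ℝ)) x := by
  have h1 : HasFDerivAt (fun y : Pt n => (y i.succ)⁻¹)
      ((-((x i.succ) ^ 2)⁻¹) • (ContinuousLinearMap.proj i.succ : Pt n →L[ℝ] ℝ)) x := by
    have hinv : HasDerivAt (fun t : ℝ => t⁻¹) (-((x i.succ) ^ 2)⁻¹) (x i.succ) :=
      hasDerivAt_inv hx
    have hco : HasDerivAt (fun t : ℝ => t⁻¹) (-((x i.succ) ^ 2)⁻¹)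
        ((fun y : Pt n => y i.succ) x) := hinv
    exact hco.comp_hasFDerivAt x (hasFDerivAt_coord i.succ x)
  have h2 := h1.const_mul kk
  have hfun : (fun y : Pt n => kk * (y i.succ)⁻¹) = fun y : Pt n => kk / y i.succ := by
    funext y; rw [div_eq_mul_inv]
  rw [hfun] at h2
  rw [smul_smul] at h2
  exact h2

lemma pd_quot_smul {f : Pt n → Cl n} {x : Pt n} (j : Fin (n+1)) (i : Fin n)
    (hx : x i.succ ≠ 0) (kk : ℝ) (hf : DifferentiableAt ℝ f x) :
    pd j (fun y => (kk / y i.succ) • f y) x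
      = (if j = i.succ then kk * (-((x i.succ) ^ 2)⁻¹) else 0) • f x
        + (kk / x i.succ) • pd j f x := by
  rw [pd_smul j (hasFDerivAt_quot i hx kk) hf]
  congr 2
  show (kk * (-((x i.succ) ^ 2)⁻¹)) * ((Pi.single j 1 : Pt n) i.succ)
    = if j = i.succ then kk * (-((x i.succ) ^ 2)⁻¹) else 0
  rw [Pi.single_apply]
  by_cases h : i.succ = j
  · rw [if_pos h, if_pos h.symm, mul_one]
  · rw [if_neg h, if_neg (fun hh => h hh.symm), mul_zero]

lemma pd_im_mul {f : Pt n → Cl n} {x : Pt n} (i : Fin n)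
    (hf : DifferentiableAt ℝ f x) :
    pd i.succ (fun y => im y * f y) x = gen i * f x + im x * pd i.succ f x := by
  have hdim : DifferentiableAt ℝ (im : Pt n → Cl n) x :=
    (imCLM (n := n)).differentiableAt
  rw [pd_mul i.succ hdim hf]
  have him : pd i.succ (im : Pt n → Cl n) x = gen i := by
    have h0 : fderiv ℝ (im : Pt n → Cl n) x = imCLM (n := n) :=
      ((imCLM (n := n)).hasFDerivAt (x := x)).fderiv
    show (fderiv ℝ (im : Pt n → Cl n) x) (Pi.single i.succ 1) = gen i
    rw [h0]
    show im (Pi.single i.succ 1 : Pt n) = gen i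
    show (∑ j : Fin n, (Pi.single i.succ 1 : Pt n) j.succ • gen j) = gen i
    rw [Finset.sum_eq_single i (fun b _ hb => by
      have hz : (Pi.single i.succ 1 : Pt n) b.succ = 0 := by
        rw [Pi.single_apply, if_neg (fun h => hb (Fin.succ_inj.mp h))]
      rw [hz, zero_smul]) (fun h => absurd (Finset.mem_univ i) h)]
    have h1 : (Pi.single i.succ 1 : Pt n) i.succ = 1 := by rw [Pi.single_apply, if_pos rfl]
    rw [h1, one_smul]
  rw [him]

/-! #### Differentiability lemmas -/

lemma diff_pd {f : Pt n → Cl n} {x : Pt n} (m : Fin (n+1)) (hf : ContDiffAt ℝ 2 f x) :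
    DifferentiableAt ℝ (pd m f) x := by
  have h1 : ContDiffAt ℝ 1 (fderiv ℝ f) x := hf.fderiv_right (m := 1) (by norm_num)
  have h2 : DifferentiableAt ℝ (fderiv ℝ f) x := h1.differentiableAt one_ne_zero
  exact h2.clm_apply (differentiableAt_const _)

lemma diff_quot (i : Fin n) {x : Pt n} (hx : x i.succ ≠ 0) (kk : ℝ) :
    DifferentiableAt ℝ (fun y : Pt n => kk / y i.succ) x :=
  (hasFDerivAt_quot i hx kk).differentiableAt

lemma diff_comp_refl {f : Pt n → Cl n} {x : Pt n} (i : Fin n)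
    (hf : DifferentiableAt ℝ f (refl i x)) :
    DifferentiableAt ℝ (fun y => f (refl i y)) x := by
  have h1 : DifferentiableAt ℝ f (reflCLM i x) := by rw [reflCLM_apply]; exact hf
  exact h1.comp x (reflCLM i).differentiableAt

lemma diff_T {k : Fin n → ℝ} {f : Pt n → Cl n} {x : Pt n} (i : Fin n)
    (hf2 : ContDiffAt ℝ 2 f x) (hfr : DifferentiableAt ℝ f (refl i x))
    (hx : x i.succ ≠ 0) :
    DifferentiableAt ℝ (T k i f) x := by
  have hfd : DifferentiableAt ℝ f x := hf2.differentiableAt two_ne_zero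
  exact (diff_pd i.succ hf2).add
    ((diff_quot i hx (k i)).smul (hfd.sub (diff_comp_refl i hfr)))

lemma diff_const_mul {g : Pt n → Cl n} {x : Pt n} (a : Cl n)
    (hg : DifferentiableAt ℝ g x) :
    DifferentiableAt ℝ (fun y => a * g y) x :=
  (mulCLM a).differentiableAt.comp x hg

lemma diff_dunklDirac {k : Fin n → ℝ} {f : Pt n → Cl n} {x : Pt n}
    (hf2 : ContDiffAt ℝ 2 f x) (hfr : ∀ i, DifferentiableAt ℝ f (refl i x))
    (hx : ∀ i : Fin n, x i.succ ≠ 0) :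
    DifferentiableAt ℝ (dunklDirac k f) x := by
  have : DifferentiableAt ℝ (fun y => ∑ i : Fin n, gen i * T k i f y) x :=
    DifferentiableAt.fun_sum fun i _ => diff_const_mul (gen i) (diff_T i hf2 (hfr i) (hx i))
  exact this

lemma diff_euler {f : Pt n → Cl n} {x : Pt n} (hf2 : ContDiffAt ℝ 2 f x) :
    DifferentiableAt ℝ (euler f) x := by
  have : DifferentiableAt ℝ (fun y => ∑ m : Fin n, y m.succ • pd m.succ f y) x :=
    DifferentiableAt.fun_sum fun m _ =>
      ((hasFDerivAt_coord m.succ x).differentiableAt).smul (diff_pd m.succ hf2)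
  exact this

lemma diff_im_mul {g : Pt n → Cl n} {x : Pt n} (hg : DifferentiableAt ℝ g x) :
    DifferentiableAt ℝ (fun y => im y * g y) x := by
  have hc : DifferentiableAt ℝ (fun y => mulCLM (im y)) x :=
    (mulCLM (n := n)).differentiableAt.comp x (imCLM (n := n)).differentiableAt
  exact hc.clm_apply hg

/-! #### Schwarz symmetry -/

lemma pd_pd_comm {f : Pt n → Cl n} {x : Pt n} (hf : ContDiffAt ℝ 2 f x)
    (j m : Fin (n+1)) : pd j (pd m f) x = pd m (pd j f) x := by
  have hs : IsSymmSndFDerivAt ℝ f x := hf.isSymmSndFDerivAt (by simp [minSmoothness_of_isRCLikeNormedField])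
  have h1 : DifferentiableAt ℝ (fderiv ℝ f) x :=
    (hf.fderiv_right (m := 1) (by norm_num)).differentiableAt one_ne_zero
  have key : ∀ a b : Fin (n+1), pd a (pd b f) x
      = fderiv ℝ (fderiv ℝ f) x (Pi.single a 1) (Pi.single b 1) := by
    intro a b
    show (fderiv ℝ (fun y => (fderiv ℝ f y) (Pi.single b 1)) x) (Pi.single a 1) = _
    rw [fderiv_clm_apply h1 (differentiableAt_const _)]
    simp
  rw [key, key, hs]

/-! #### dunklDirac congruence and linearity -/

lemma dunklDirac_congr {k : Fin n → ℝ} {g₁ g₂ : Pt n → Cl n} {U : Set (Pt n)} {x : Pt n}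
    (hU : IsOpen U) (hUr : ∀ i, ∀ y ∈ U, refl i y ∈ U) (hx : x ∈ U)
    (h : ∀ y ∈ U, g₁ y = g₂ y) :
    dunklDirac k g₁ x = dunklDirac k g₂ x := by
  have hev : g₁ =ᶠ[nhds x] g₂ := Filter.eventually_of_mem (hU.mem_nhds hx) h
  show (∑ i : Fin n, gen i * (pd i.succ g₁ x + (k i / x i.succ) • (g₁ x - g₁ (refl i x))))
    = ∑ i : Fin n, gen i * (pd i.succ g₂ x + (k i / x i.succ) • (g₂ x - g₂ (refl i x)))
  refine Finset.sum_congr rfl fun i _ => ?_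
  rw [pd_congr _ hev, h x hx, h _ (hUr i x hx)]

lemma dunklDirac_add {k : Fin n → ℝ} {g h : Pt n → Cl n} {x : Pt n}
    (hg : DifferentiableAt ℝ g x) (hh : DifferentiableAt ℝ h x) :
    dunklDirac k (fun y => g y + h y) x = dunklDirac k g x + dunklDirac k h x := by
  show (∑ i : Fin n, gen i * (pd i.succ (fun y => g y + h y) x
      + (k i / x i.succ) • ((g x + h x) - (g (refl i x) + h (refl i x))))) = _
  rw [show dunklDirac k g x + dunklDirac k h x
    = ∑ i : Fin n, ((gen i * (pd i.succ g x + (k i / x i.succ) • (g x - g (refl i x))))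
      + gen i * (pd i.succ h x + (k i / x i.succ) • (h x - h (refl i x))))
    from (Finset.sum_add_distrib).symm]
  refine Finset.sum_congr rfl fun i _ => ?_
  rw [pd_add _ hg hh, ← mul_add]
  congr 1
  module

lemma dunklDirac_neg {k : Fin n → ℝ} {g : Pt n → Cl n} {x : Pt n} :
    dunklDirac k (fun y => -(g y)) x = -(dunklDirac k g x) := by
  show (∑ i : Fin n, gen i * (pd i.succ (fun y => -(g y)) x
      + (k i / x i.succ) • ((-(g x)) - (-(g (refl i x)))))) = _
  rw [show -(dunklDirac k g x)
    = ∑ i : Fin n, -(gen i * (pd i.succ g x + (k i / x i.succ) • (g x - g (refl i x))))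
    from (Finset.sum_neg_distrib _).symm]
  refine Finset.sum_congr rfl fun i _ => ?_
  rw [pd_neg, ← mul_neg]
  congr 1
  module

lemma dunklDirac_sub {k : Fin n → ℝ} {g h : Pt n → Cl n} {x : Pt n}
    (hg : DifferentiableAt ℝ g x) (hh : DifferentiableAt ℝ h x) :
    dunklDirac k (fun y => g y - h y) x = dunklDirac k g x - dunklDirac k h x := by
  have h1 : dunklDirac k (fun y => g y + -(h y)) x
      = dunklDirac k g x + dunklDirac k (fun y => -(h y)) x :=
    dunklDirac_add hg hh.neg
  have h2 : (fun y => g y - h y) = fun y => g y + -(h y) := by funext y; rw [sub_eq_add_neg]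
  rw [h2, h1, dunklDirac_neg, ← sub_eq_add_neg]

lemma dunklDirac_const_smul {k : Fin n → ℝ} {g : Pt n → Cl n} {x : Pt n} (c : ℝ)
    (hg : DifferentiableAt ℝ g x) :
    dunklDirac k (fun y => c • g y) x = c • dunklDirac k g x := by
  show (∑ i : Fin n, gen i * (pd i.succ (fun y => c • g y) x
      + (k i / x i.succ) • ((c • g x) - (c • g (refl i x))))) = _
  rw [show dunklDirac k g x
    = ∑ i : Fin n, gen i * (pd i.succ g x + (k i / x i.succ) • (g x - g (refl i x)))
    from rfl, Finset.smul_sum]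
  refine Finset.sum_congr rfl fun i _ => ?_
  rw [pd_const_smul _ c hg, ← mul_smul_comm]
  congr 1
  module

/-! #### auxiliary algebra rewrite lemmas -/

lemma gen_mul_gen_mul (i : Fin n) (v : Cl n) : gen i * (gen i * v) = -v := by
  rw [← mul_assoc, gen_sq, neg_one_mul]

lemma gen_mul_im_mul (i : Fin n) (x : Pt n) (v : Cl n) :
    gen i * (im x * v) = -(im x * (gen i * v)) - (2 * x i.succ) • v := by
  rw [← mul_assoc, gen_mul_im, sub_mul, neg_mul, mul_assoc, algebraMap_mul_eq_smul]

lemma refl_apply_succ (i j : Fin n) (x : Pt n) :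
    refl i x j.succ = if j = i then -(x j.succ) else x j.succ := by
  show (if j.succ = i.succ then -(x j.succ) else x j.succ) = _
  by_cases h : j = i
  · rw [if_pos (by rw [h]), if_pos h]
  · rw [if_neg (fun hh => h (Fin.succ_inj.mp hh)), if_neg h]

lemma normSq_refl (i : Fin n) (x : Pt n) : normSqIm (refl i x) = normSqIm x := by
  show (∑ j : Fin n, (refl i x j.succ)^2) = ∑ j : Fin n, (x j.succ)^2
  refine Finset.sum_congr rfl fun j _ => ?_
  rw [refl_apply_succ]
  by_cases h : j = i
  · rw [if_pos h, neg_sq]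
  · rw [if_neg h]

/-! #### the identity `D̲(‖x̲‖² f) = ‖x̲‖² D̲f + 2 x̲ f` -/

lemma hasFDerivAt_normSq (x : Pt n) :
    HasFDerivAt (normSqIm (n := n))
      (∑ j : Fin n, (2 * x j.succ) •
        (ContinuousLinearMap.proj (R := ℝ) (φ := fun _ : Fin (n+1) => ℝ) j.succ)) x := by
  have h : HasFDerivAt (fun y : Pt n => ∑ j : Fin n, (y j.succ)^2)
      (∑ j : Fin n, (2 * x j.succ) •
        (ContinuousLinearMap.proj (R := ℝ) (φ := fun _ : Fin (n+1) => ℝ) j.succ)) x := by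
    refine HasFDerivAt.fun_sum fun j _ => ?_
    have hp : HasDerivAt (fun t : ℝ => t^2) (2 * x j.succ) ((fun y : Pt n => y j.succ) x) := by
      simpa using hasDerivAt_pow 2 (x j.succ)
    exact hp.comp_hasFDerivAt x (hasFDerivAt_coord j.succ x)
  exact h

lemma pd_normSq_smul {f : Pt n → Cl n} {x : Pt n} (i : Fin n)
    (hf : DifferentiableAt ℝ f x) :
    pd i.succ (fun y => normSqIm y • f y) x
      = (2 * x i.succ) • f x + normSqIm x • pd i.succ f x := by
  rw [pd_smul i.succ (hasFDerivAt_normSq x) hf]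
  congr 2
  rw [ContinuousLinearMap.sum_apply]
  rw [Finset.sum_eq_single i (fun b _ hb => by
    have hz : (Pi.single i.succ 1 : Pt n) b.succ = 0 := by
      rw [Pi.single_apply, if_neg (fun h => hb (Fin.succ_inj.mp h))]
    show (2 * x b.succ) • ((Pi.single i.succ 1 : Pt n) b.succ) = 0
    rw [hz, smul_zero]) (fun h => absurd (Finset.mem_univ i) h)]
  show (2 * x i.succ) • ((Pi.single i.succ 1 : Pt n) i.succ) = 2 * x i.succ
  have h1 : (Pi.single i.succ 1 : Pt n) i.succ = 1 := by rw [Pi.single_apply, if_pos rfl]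
  rw [h1, smul_eq_mul, mul_one]

lemma dunklDirac_normSq_smul (k : Fin n → ℝ) {f : Pt n → Cl n} {x : Pt n}
    (hf : DifferentiableAt ℝ f x) :
    dunklDirac k (fun y => normSqIm y • f y) x
      = normSqIm x • dunklDirac k f x + (2:ℝ) • (im x * f x) := by
  show (∑ i : Fin n, gen i * (pd i.succ (fun y => normSqIm y • f y) x
      + (k i / x i.succ) • (normSqIm x • f x - normSqIm (refl i x) • f (refl i x)))) = _
  have hAf : normSqIm x • dunklDirac k f x + (2:ℝ) • (im x * f x)
      = ∑ i : Fin n,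
          (normSqIm x • (gen i * (pd i.succ f x + (k i / x i.succ) • (f x - f (refl i x))))
            + (2:ℝ) • (x i.succ • (gen i * f x))) := by
    rw [Finset.sum_add_distrib, ← Finset.smul_sum, ← Finset.smul_sum, ← im_mul_eq_sum]
    rfl
  rw [hAf]
  refine Finset.sum_congr rfl fun i _ => ?_
  rw [pd_normSq_smul i hf, normSq_refl i x]
  simp only [smul_smul, ← mul_smul_comm, ← mul_add]
  congr 1
  module

/-! #### the identity for `D̲(x̲ f)` -/

lemma gen_mul_T_im_mul (k : Fin n → ℝ) (i : Fin n) {f : Pt n → Cl n} {x : Pt n}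
    (hx : x i.succ ≠ 0) (hf : DifferentiableAt ℝ f x) :
    gen i * T k i (fun y => im y * f y) x
      = -(im x * (gen i * T k i f x)) - (2 * x i.succ) • pd i.succ f x
        - ((2 * k i) • f x + f x) := by
  have hc : k i / x i.succ * (2 * x i.succ) = 2 * k i := by
    field_simp
  show gen i * (pd i.succ (fun y => im y * f y) x
      + (k i / x i.succ) • (im x * f x - im (refl i x) * f (refl i x))) = _
  rw [pd_im_mul i hf, im_refl i x]
  rw [show T k i f x = pd i.succ f x + (k i / x i.succ) • (f x - f (refl i x)) from rfl]
  rw [sub_mul, smul_mul_assoc]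
  simp only [mul_add, mul_sub, mul_smul_comm, smul_sub, smul_add, smul_smul]
  simp only [gen_mul_gen_mul, gen_mul_im_mul]
  simp only [smul_sub, smul_add, smul_smul, mul_sub, mul_add, mul_smul_comm]
  match_scalars <;> field_simp <;> ring

lemma dunklDirac_im_mul (k : Fin n → ℝ) {f : Pt n → Cl n} {x : Pt n}
    (hnz : allNZ x) (hf : DifferentiableAt ℝ f x) :
    dunklDirac k (fun y => im y * f y) x
      = -(im x * dunklDirac k f x) - (2:ℝ) • euler f x
        - ((2 * ∑ i, k i) • f x + (n:ℝ) • f x) := by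
  show (∑ i : Fin n, gen i * T k i (fun y => im y * f y) x) = _
  rw [Finset.sum_congr rfl (fun i _ => gen_mul_T_im_mul k i (hnz i) hf)]
  rw [Finset.sum_sub_distrib, Finset.sum_sub_distrib]
  congr 1
  · congr 1
    · rw [Finset.sum_neg_distrib, ← Finset.mul_sum]
      rfl
    · have : ∀ i : Fin n, (2 * x i.succ) • pd i.succ f x
          = (2:ℝ) • (x i.succ • pd i.succ f x) := by
        intro i; rw [smul_smul]
      rw [Finset.sum_congr rfl (fun i _ => this i), ← Finset.smul_sum]
      rfl
  · rw [Finset.sum_add_distrib]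
    congr 1
    · rw [← Finset.sum_smul, ← Finset.mul_sum]
    · rw [Finset.sum_const, Finset.card_univ, Fintype.card_fin]
      rw [Nat.cast_smul_eq_nsmul ℝ n (f x)]

lemma sum_ite_succ_eq (i : Fin n) (F : Fin n → Cl n) :
    (∑ m : Fin n, if m.succ = i.succ then F m else 0) = F i := by
  rw [Finset.sum_eq_single i
    (fun b _ hb => if_neg (fun h => hb (Fin.succ_inj.mp h)))
    (fun h => absurd (Finset.mem_univ i) h), if_pos rfl]

/-! #### the identity `D̲𝔼 = 𝔼D̲ + D̲` -/

lemma dunklDirac_euler (k : Fin n → ℝ) {f : Pt n → Cl n} {x : Pt n}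
    (hnz : allNZ x) (hf2 : ContDiffAt ℝ 2 f x)
    (hfr : ∀ i, DifferentiableAt ℝ f (refl i x)) :
    dunklDirac k (euler f) x = euler (dunklDirac k f) x + dunklDirac k f x := by
  have hfd : DifferentiableAt ℝ f x := hf2.differentiableAt two_ne_zero
  have hdm : ∀ m : Fin (n+1), DifferentiableAt ℝ (pd m f) x := fun m => diff_pd m hf2
  -- Step A : derivative of the Euler operator
  have stepA : ∀ i : Fin n, pd i.succ (euler f) x
      = pd i.succ f x + ∑ m : Fin n, x m.succ • pd i.succ (pd m.succ f) x := by
    intro i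
    have h1 : pd i.succ (fun y => ∑ m : Fin n, y m.succ • pd m.succ f y) x
        = ∑ m : Fin n, pd i.succ (fun y => y m.succ • pd m.succ f y) x :=
      pd_sum i.succ (fun m _ =>
        ((hasFDerivAt_coord m.succ x).differentiableAt).smul (hdm m.succ))
    have h2 : ∀ m : Fin n, pd i.succ (fun y => y m.succ • pd m.succ f y) x
        = (if m.succ = i.succ then (1:ℝ) else 0) • pd m.succ f x
          + x m.succ • pd i.succ (pd m.succ f) x := fun m =>
      pd_coord_smul i.succ m.succ (hdm m.succ)
    calc pd i.succ (euler f) x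
        = ∑ m : Fin n, pd i.succ (fun y => y m.succ • pd m.succ f y) x := h1
      _ = ∑ m : Fin n, ((if m.succ = i.succ then (1:ℝ) else 0) • pd m.succ f x
            + x m.succ • pd i.succ (pd m.succ f) x) :=
          Finset.sum_congr rfl fun m _ => h2 m
      _ = pd i.succ f x + ∑ m : Fin n, x m.succ • pd i.succ (pd m.succ f) x := by
          rw [Finset.sum_add_distrib]
          congr 1
          have h3 : ∀ m : Fin n, (if m.succ = i.succ then (1:ℝ) else 0) • pd m.succ f x
              = if m.succ = i.succ then pd m.succ f x else 0 := by
            intro m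
            by_cases h : m.succ = i.succ
            · rw [if_pos h, if_pos h, one_smul]
            · rw [if_neg h, if_neg h, zero_smul]
          rw [Finset.sum_congr rfl (fun m _ => h3 m), sum_ite_succ_eq]
  -- Step B : derivative of the Dunkl-Dirac operator
  have hTd : ∀ i : Fin n, DifferentiableAt ℝ (T k i f) x :=
    fun i => diff_T i hf2 (hfr i) (hnz i)
  have hsubd : ∀ i : Fin n, DifferentiableAt ℝ (fun y => f y - f (refl i y)) x :=
    fun i => hfd.sub (diff_comp_refl i (hfr i))
  have stepB : ∀ m : Fin n, pd m.succ (dunklDirac k f) x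
      = ∑ i : Fin n, gen i * (pd m.succ (pd i.succ f) x
          + ((if m.succ = i.succ then k i * (-((x i.succ)^2)⁻¹) else 0) • (f x - f (refl i x))
            + (k i / x i.succ) • (pd m.succ f x
                - (if m.succ = i.succ then (-1:ℝ) else 1) • pd m.succ f (refl i x)))) := by
    intro m
    have h1 : pd m.succ (fun y => ∑ i : Fin n, gen i * T k i f y) x
        = ∑ i : Fin n, pd m.succ (fun y => gen i * T k i f y) x :=
      pd_sum m.succ (fun i _ => diff_const_mul (gen i) (hTd i))
    refine h1.trans (Finset.sum_congr rfl fun i _ => ?_)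
    rw [pd_const_mul m.succ (gen i) (hTd i)]
    congr 1
    have h2 : pd m.succ (fun y => pd i.succ f y + (k i / y i.succ) • (f y - f (refl i y))) x
        = pd m.succ (pd i.succ f) x
          + pd m.succ (fun y => (k i / y i.succ) • (f y - f (refl i y))) x :=
      pd_add m.succ (hdm i.succ) ((diff_quot i (hnz i) (k i)).smul (hsubd i))
    rw [show T k i f = fun y => pd i.succ f y + (k i / y i.succ) • (f y - f (refl i y))
      from rfl, h2]
    congr 1
    rw [pd_quot_smul m.succ i (hnz i) (k i) (hsubd i)]
    rw [pd_sub m.succ hfd (diff_comp_refl i (hfr i)), pd_comp_refl m.succ i (hfr i)]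
  -- Step C : the Euler operator applied to the Dunkl-Dirac operator
  have stepC : euler (dunklDirac k f) x
      = ∑ i : Fin n, gen i * ((∑ m : Fin n, x m.succ • pd m.succ (pd i.succ f) x)
          + ((-(k i / x i.succ)) • (f x - f (refl i x))
            + (k i / x i.succ) • (euler f x - euler f (refl i x)))) := by
    show (∑ m : Fin n, x m.succ • pd m.succ (dunklDirac k f) x) = _
    rw [Finset.sum_congr rfl (fun m _ => by rw [stepB m])]
    rw [Finset.sum_congr rfl (fun m _ => Finset.smul_sum)]
    rw [Finset.sum_comm]
    refine Finset.sum_congr rfl fun i _ => ?_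
    rw [Finset.sum_congr rfl (fun m _ => (mul_smul_comm _ _ _).symm), ← Finset.mul_sum]
    congr 1
    simp only [smul_add]
    have h4 : ∀ m : Fin n,
        x m.succ • ((if m.succ = i.succ then k i * (-((x i.succ)^2)⁻¹) else 0)
            • (f x - f (refl i x)))
        = if m.succ = i.succ
            then (x i.succ * (k i * (-((x i.succ)^2)⁻¹))) • (f x - f (refl i x)) else 0 := by
      intro m
      by_cases h : m.succ = i.succ
      · have hm : m = i := Fin.succ_inj.mp h
        subst hm
        rw [if_pos rfl, if_pos rfl, smul_smul]
      · rw [if_neg h, if_neg h, zero_smul, smul_zero]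
    have hsc : x i.succ * (k i * (-((x i.succ)^2)⁻¹)) = -(k i / x i.succ) := by
      field_simp [hnz i]
    have hδ : (∑ m : Fin n, x m.succ • ((if m.succ = i.succ then k i * (-((x i.succ)^2)⁻¹)
          else 0) • (f x - f (refl i x))))
        = (-(k i / x i.succ)) • (f x - f (refl i x)) := by
      rw [Finset.sum_congr rfl (fun m _ => h4 m), sum_ite_succ_eq, hsc]
    have h5 : ∀ m : Fin n,
        x m.succ • ((k i / x i.succ) • (pd m.succ f x
            - (if m.succ = i.succ then (-1:ℝ) else 1) • pd m.succ f (refl i x)))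
        = (k i / x i.succ) • (x m.succ • pd m.succ f x
            - (refl i x) m.succ • pd m.succ f (refl i x)) := by
      intro m
      rw [smul_comm (x m.succ)]
      congr 1
      rw [smul_sub, smul_smul]
      congr 2
      rw [refl_apply_succ]
      by_cases h : m = i
      · subst h
        rw [if_pos rfl, if_pos rfl]
        ring
      · rw [if_neg (fun hh => h (Fin.succ_inj.mp hh)), if_neg h, mul_one]
    have hγ : (∑ m : Fin n, x m.succ • ((k i / x i.succ) • (pd m.succ f x
          - (if m.succ = i.succ then (-1:ℝ) else 1) • pd m.succ f (refl i x))))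
        = (k i / x i.succ) • (euler f x - euler f (refl i x)) := by
      rw [Finset.sum_congr rfl (fun m _ => h5 m), ← Finset.smul_sum, Finset.sum_sub_distrib]
      rfl
    rw [Finset.sum_add_distrib, Finset.sum_add_distrib, hδ, hγ]
  -- Step D : assembling
  rw [show dunklDirac k (euler f) x = ∑ i : Fin n, gen i * (pd i.succ (euler f) x
    + (k i / x i.succ) • (euler f x - euler f (refl i x))) from rfl]
  rw [Finset.sum_congr rfl (fun i _ => by rw [stepA i])]
  rw [stepC]
  rw [show dunklDirac k f x = ∑ i : Fin n, gen i * (pd i.succ f x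
    + (k i / x i.succ) • (f x - f (refl i x))) from rfl]
  rw [← Finset.sum_add_distrib]
  refine Finset.sum_congr rfl fun i _ => ?_
  rw [← mul_add]
  have hsch : ∀ m : Fin n, pd i.succ (pd m.succ f) x = pd m.succ (pd i.succ f) x :=
    fun m => pd_pd_comm hf2 i.succ m.succ
  rw [Finset.sum_congr rfl (fun m _ => by rw [hsch m])]
  congr 1
  module

end Dunkl

open Dunkl

/-- The Casimir operator `S̲f = ½(x̲(D̲f) − D̲(x̲f) − f)` anticommutes with
`D̲` and with left multiplication by `x̲`. -/
theorem statement5 (n : ℕ) (hn : 1 ≤ n) (k : Fin n → ℝ) (Ω : Set (Pt n))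
    (hopen : IsOpen Ω) (hinv : ReflInv Ω) (f : Pt n → Cl n) (hf : ContDiffOn ℝ 2 f Ω) :
    ∀ x ∈ Ω, allNZ x →
      casimir k (dunklDirac k f) x + dunklDirac k (casimir k f) x = 0 ∧
      casimir k (fun y => im y * f y) x + im x * casimir k f x = 0 := by
  classical
  intro x hx hnz
  set U : Set (Pt n) := Ω ∩ {y : Pt n | allNZ y} with hUdef
  have hUopen : IsOpen U := by
    refine hopen.inter ?_
    have hset : {y : Pt n | allNZ y} = ⋂ i : Fin n, {y : Pt n | y i.succ ≠ 0} := by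
      ext y
      simp [allNZ, Set.mem_iInter]
    rw [hset]
    exact isOpen_iInter_of_finite fun i =>
      IsOpen.preimage (continuous_apply i.succ) isOpen_compl_singleton
  have hxU : x ∈ U := ⟨hx, hnz⟩
  have hUr : ∀ i : Fin n, ∀ y ∈ U, refl i y ∈ U := by
    intro i y hy
    refine ⟨hinv i y hy.1, ?_⟩
    intro j
    rw [refl_apply_succ]
    by_cases h : j = i
    · rw [if_pos h]
      exact neg_ne_zero.mpr (hy.2 j)
    · rw [if_neg h]
      exact hy.2 j
  have hC2 : ∀ y ∈ U, ContDiffAt ℝ 2 f y := fun y hy => hf.contDiffAt (hopen.mem_nhds hy.1)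
  have hd1 : ∀ y ∈ U, DifferentiableAt ℝ f y := fun y hy => (hC2 y hy).differentiableAt two_ne_zero
  have hdr : ∀ y ∈ U, ∀ i, DifferentiableAt ℝ f (refl i y) := fun y hy i => hd1 _ (hUr i y hy)
  have hnzy : ∀ y ∈ U, allNZ y := fun y hy => hy.2
  set κ : ℝ := ∑ i, k i with hκ
  have hP1U : ∀ y ∈ U, dunklDirac k (fun z => im z * f z) y
      = -(im y * dunklDirac k f y) - (2:ℝ) • euler f y - ((2 * κ) • f y + (n:ℝ) • f y) :=
    fun y hy => dunklDirac_im_mul k (hnzy y hy) (hd1 y hy)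
  have hfd : DifferentiableAt ℝ f x := hd1 x hxU
  have hAfd : DifferentiableAt ℝ (dunklDirac k f) x :=
    diff_dunklDirac (hC2 x hxU) (hdr x hxU) hnz
  have hEd : DifferentiableAt ℝ (euler f) x := diff_euler (hC2 x hxU)
  have hh1d : DifferentiableAt ℝ (fun y => im y * dunklDirac k f y) x := diff_im_mul hAfd
  have hh2d : DifferentiableAt ℝ (dunklDirac k (fun z => im z * f z)) x := by
    have hev : dunklDirac k (fun z => im z * f z) =ᶠ[nhds x]
        (fun y => -(im y * dunklDirac k f y) - (2:ℝ) • euler f y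
          - ((2 * κ) • f y + (n:ℝ) • f y)) :=
      Filter.eventually_of_mem (hUopen.mem_nhds hxU) hP1U
    rw [hev.differentiableAt_iff]
    exact (hh1d.neg.sub (hEd.const_smul (2:ℝ))).sub
      ((hfd.const_smul (2 * κ)).add (hfd.const_smul (n:ℝ)))
  constructor
  · -- first identity
    have hsplit : dunklDirac k (casimir k f) x
        = (2:ℝ)⁻¹ • (dunklDirac k (fun y => im y * dunklDirac k f y) x
            - dunklDirac k (dunklDirac k (fun z => im z * f z)) x
            - dunklDirac k f x) := by
      have hc : casimir k f = fun y => (2:ℝ)⁻¹ • (im y * dunklDirac k f y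
          - dunklDirac k (fun z => im z * f z) y - f y) := rfl
      rw [hc]
      rw [dunklDirac_const_smul (2:ℝ)⁻¹ ((hh1d.fun_sub hh2d).fun_sub hfd)]
      rw [dunklDirac_sub (hh1d.fun_sub hh2d) hfd]
      rw [dunklDirac_sub hh1d hh2d]
    have hDh2 : dunklDirac k (dunklDirac k (fun z => im z * f z)) x
        = -(dunklDirac k (fun y => im y * dunklDirac k f y) x)
          - (2:ℝ) • dunklDirac k (euler f) x
          - ((2 * κ) • dunklDirac k f x + (n:ℝ) • dunklDirac k f x) := by
      have h0 : dunklDirac k (dunklDirac k (fun z => im z * f z)) x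
          = dunklDirac k (fun y => -(im y * dunklDirac k f y) - (2:ℝ) • euler f y
              - ((2 * κ) • f y + (n:ℝ) • f y)) x :=
        dunklDirac_congr hUopen hUr hxU hP1U
      rw [h0]
      rw [dunklDirac_sub (hh1d.fun_neg.fun_sub (hEd.fun_const_smul (2:ℝ)))
        ((hfd.fun_const_smul (2 * κ)).fun_add (hfd.fun_const_smul (n:ℝ)))]
      rw [dunklDirac_sub hh1d.fun_neg (hEd.fun_const_smul (2:ℝ))]
      rw [dunklDirac_neg]
      rw [dunklDirac_const_smul (2:ℝ) hEd]
      rw [dunklDirac_add (hfd.fun_const_smul (2 * κ)) (hfd.fun_const_smul (n:ℝ))]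
      rw [dunklDirac_const_smul (2 * κ) hfd, dunklDirac_const_smul (n:ℝ) hfd]
    have hP1A : dunklDirac k (fun y => im y * dunklDirac k f y) x
        = -(im x * dunklDirac k (dunklDirac k f) x) - (2:ℝ) • euler (dunklDirac k f) x
          - ((2 * κ) • dunklDirac k f x + (n:ℝ) • dunklDirac k f x) :=
      dunklDirac_im_mul k hnz hAfd
    have hP2 : dunklDirac k (euler f) x = euler (dunklDirac k f) x + dunklDirac k f x :=
      dunklDirac_euler k hnz (hC2 x hxU) (hdr x hxU)
    show (2:ℝ)⁻¹ • (im x * dunklDirac k (dunklDirac k f) x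
        - dunklDirac k (fun y => im y * dunklDirac k f y) x - dunklDirac k f x)
      + dunklDirac k (casimir k f) x = 0
    rw [hsplit, hDh2, hP1A, hP2]
    module
  · -- second identity
    have hXX : (fun y => im y * ((fun z => im z * f z) y))
        = fun y => -(normSqIm y • f y) := by
      funext y
      show im y * (im y * f y) = _
      rw [← mul_assoc, im_mul_im, algebraMap_mul_eq_smul, neg_smul]
    have hD2 : dunklDirac k (fun y => im y * ((fun z => im z * f z) y)) x
        = -(normSqIm x • dunklDirac k f x + (2:ℝ) • (im x * f x)) := by
      rw [hXX, dunklDirac_neg, dunklDirac_normSq_smul k hfd]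
    have him2 : im x * (im x * dunklDirac k f x) = -(normSqIm x • dunklDirac k f x) := by
      rw [← mul_assoc, im_mul_im, algebraMap_mul_eq_smul, neg_smul]
    have hmc : im x * casimir k f x = (2:ℝ)⁻¹ • (im x * (im x * dunklDirac k f x)
        - im x * dunklDirac k (fun z => im z * f z) x - im x * f x) := by
      show im x * ((2:ℝ)⁻¹ • (im x * dunklDirac k f x
          - dunklDirac k (fun z => im z * f z) x - f x)) = _
      rw [mul_smul_comm]
      congr 1
      rw [mul_sub, mul_sub]
    show (2:ℝ)⁻¹ • (im x * dunklDirac k (fun z => im z * f z) x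
        - dunklDirac k (fun y => im y * ((fun z => im z * f z) y)) x - (im x * f x))
      + im x * casimir k f x = 0
    rw [hD2, hmc, him2]
    module
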